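/- arXiv:1209.0604 — 2 statements merged into one kernel-verified Lean document; each statement's English description precedes it below -/
import Mathlib

section
/- sum_{n=1}^infty H_n * zeta(3, n) = 2*zeta(3) + (5/4)*zeta(4) - zeta(2), where zeta(3, n) = sum_{j=0}^infty 1/(j+n)^3 is the Hurwitz zeta function. -/
open scoped BigOperators

noncomputable def H (n : ℕ) : ℝ := ∑ k ∈ Finset.range n, (1 : ℝ) / (k + 1)

noncomputable def h : ℕ → ℕ → ℝ
  | 0, n => 1 / n
  | r + 1, n => ∑ k ∈ Finset.range n, h r (k + 1)

noncomputable def zeta (m : ℕ) : ℝ := ∑' n : ℕ, (1 : ℝ) / ((n : ℝ) + 1) ^ m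

noncomputable def hzeta (m k : ℕ) : ℝ := ∑' j : ℕ, (1 : ℝ) / ((j : ℝ) + k) ^ m

noncomputable def zetaH (m : ℕ) : ℝ := ∑' n : ℕ, H (n + 1) / ((n : ℝ) + 1) ^ m

def stirling1 : ℕ → ℕ → ℕ
  | 0, 0 => 1
  | 0, _ + 1 => 0
  | _ + 1, 0 => 0
  | n + 1, k + 1 => stirling1 n k + n * stirling1 n (k + 1)


/-!
Exchanging the order of summation, `∑_{n ≥ 1} H_n ζ(3, n) = ∑_{m ≥ 1} m⁻³ ∑_{n ≤ m} H_n`, and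
`∑_{n ≤ m} H_n = (m + 1) H_m - m`, so the sum is `ζ_H(3) + ζ_H(2) - ζ(2)`.

Both Euler sums come from the double series `ζ_H(s + 1) = ∑_{n, k ≥ 1} 1 / (n^s k (n + k))`,
which follows from the telescoping identity `∑_k 1 / (k (n + k)) = H_n / n`. For `s = 2`,
symmetrizing in `(n, k)` gives `2 ζ_H(3) = ∑_{n, k} 1 / (n² k²) = ζ(2)² = (5/2) ζ(4)`. For `s = 1`,
`1 / (n k (n + k)) = 1 / (n (n + k)²) + 1 / (k (n + k)²)` gives
`ζ_H(2) = 2 ∑_{n < m} 1 / (n m²) = 2 (ζ_H(2) - ζ(3))`.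
-/

open Finset Filter Topology

lemma H_zero : H 0 = 0 := sum_range_zero _

lemma H_succ (n : ℕ) : H (n + 1) = H n + 1 / ((n : ℝ) + 1) := sum_range_succ _ _

lemma H_nonneg (n : ℕ) : 0 ≤ H n := by
  unfold H; positivity

lemma H_eq_harmonic (n : ℕ) : H n = harmonic n := by
  simp [H, harmonic]

lemma H_succ_le_three_mul_rpow (n : ℕ) : H (n + 1) ≤ 3 * ((n : ℝ) + 1) ^ (1 / 2 : ℝ) := by
  have hn : (1 : ℝ) ≤ (n : ℝ) + 1 := by simp
  have hlog := Real.log_le_rpow_div (x := (n : ℝ) + 1) (by positivity) (ε := 1 / 2) (by norm_num)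
  have hone : 1 ≤ ((n : ℝ) + 1) ^ (1 / 2 : ℝ) := Real.one_le_rpow hn (by norm_num)
  have hharm := harmonic_le_one_add_log (n + 1)
  rw [H_eq_harmonic]
  push_cast at hharm
  linarith

lemma summable_H_succ_div_pow {s : ℕ} (hs : 2 ≤ s) :
    Summable fun n : ℕ => H (n + 1) / ((n : ℝ) + 1) ^ s := by
  have hrpow : Summable fun n : ℕ => 3 * ((n : ℝ) + 1) ^ (1 / 2 - 2 : ℝ) := by
    refine Summable.mul_left 3 ?_
    exact_mod_cast (summable_nat_add_iff 1).2 (Real.summable_nat_rpow.2 (by norm_num))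
  refine hrpow.of_nonneg_of_le (fun n => by have := H_nonneg (n + 1); positivity) fun n => ?_
  have hn : (1 : ℝ) ≤ (n : ℝ) + 1 := by simp
  calc H (n + 1) / ((n : ℝ) + 1) ^ s
      ≤ 3 * ((n : ℝ) + 1) ^ (1 / 2 : ℝ) / ((n : ℝ) + 1) ^ (2 : ℝ) := by
        rw [Real.rpow_two]
        gcongr
        exact H_succ_le_three_mul_rpow n
    _ = 3 * ((n : ℝ) + 1) ^ (1 / 2 - 2 : ℝ) := by
        rw [Real.rpow_sub (by positivity), mul_div_assoc]

lemma hasSum_zetaH {s : ℕ} (hs : 2 ≤ s) :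
    HasSum (fun n : ℕ => H (n + 1) / ((n : ℝ) + 1) ^ s) (zetaH s) :=
  (summable_H_succ_div_pow hs).hasSum

lemma sum_range_H_succ (m : ℕ) :
    ∑ a ∈ range (m + 1), H (a + 1) = ((m : ℝ) + 2) * H (m + 1) - ((m : ℝ) + 1) := by
  induction m with
  | zero => norm_num [H]
  | succ m ih =>
    rw [sum_range_succ, ih, H_succ (m + 1)]
    push_cast
    field_simp
    ring

lemma summable_one_div_add_pow {m : ℕ} (hm : 1 < m) (k : ℕ) :
    Summable fun j : ℕ => 1 / ((j : ℝ) + k) ^ m := by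
  exact_mod_cast (summable_nat_add_iff k).2 (Real.summable_one_div_nat_pow.2 hm)

lemma hasSum_hzeta {m : ℕ} (hm : 1 < m) (k : ℕ) :
    HasSum (fun j : ℕ => 1 / ((j : ℝ) + k) ^ m) (hzeta m k) :=
  (summable_one_div_add_pow hm k).hasSum

lemma hasSum_zeta {m : ℕ} (hm : 1 < m) :
    HasSum (fun n : ℕ => 1 / ((n : ℝ) + 1) ^ m) (zeta m) := by
  have h := summable_one_div_add_pow hm 1
  rw [Nat.cast_one] at h
  exact h.hasSum

lemma zeta_eq_of_hasSum {m : ℕ} (hm : m ≠ 0) {a : ℝ} (h : HasSum (fun n : ℕ => 1 / (n : ℝ) ^ m) a) :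
    zeta m = a := by
  rw [← hasSum_nat_add_iff' 1] at h
  simpa [zeta, hm] using h.tsum_eq

lemma hasSum_sub_succ_of_antitone {f : ℕ → ℝ} (hf : Antitone f) (hlim : Tendsto f atTop (𝓝 0)) :
    HasSum (fun k => f k - f (k + 1)) (f 0) := by
  refine (hasSum_iff_tendsto_nat_of_nonneg (fun k => sub_nonneg.2 (hf k.le_succ)) _).2 ?_
  simp_rw [sum_range_sub']
  simpa using tendsto_const_nhds.sub hlim

lemma hasSum_one_div_succ_sub_one_div_add (n : ℕ) :
    HasSum (fun k : ℕ => 1 / ((k : ℝ) + 1) - 1 / ((k : ℝ) + n + 1)) (H n) := by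
  induction n with
  | zero => simp [H]
  | succ n ih =>
    have hstep : HasSum (fun k : ℕ => 1 / ((k : ℝ) + n + 1) - 1 / (((k + 1 : ℕ) : ℝ) + n + 1))
        (1 / ((0 : ℕ) + (n : ℝ) + 1)) := by
      refine hasSum_sub_succ_of_antitone (fun i j hij => ?_) ?_
      · gcongr
      · exact tendsto_const_nhds.div_atTop (tendsto_atTop_add_const_right _ _
          (tendsto_atTop_add_const_right _ _ tendsto_natCast_atTop_atTop))
    convert ih.add hstep using 1
    · funext k; push_cast; ring
    · rw [H_succ]; simp

lemma hasSum_one_div_mul_add (n : ℕ) :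
    HasSum (fun k : ℕ => 1 / (((k : ℝ) + 1) * ((k : ℝ) + n + 2))) (H (n + 1) / ((n : ℝ) + 1)) := by
  have hterm (k : ℕ) : (1 / ((k : ℝ) + 1) - 1 / ((k : ℝ) + (n + 1 : ℕ) + 1)) / ((n : ℝ) + 1)
      = 1 / (((k : ℝ) + 1) * ((k : ℝ) + n + 2)) := by
    push_cast
    field_simp
    ring
  simpa only [hterm] using (hasSum_one_div_succ_sub_one_div_add (n + 1)).div_const ((n : ℝ) + 1)

lemma hasSum_prod_iff_antidiagonal_of_nonneg {F : ℕ × ℕ → ℝ} (hF : 0 ≤ F) {s : ℝ} :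
    HasSum F s ↔ HasSum (fun n => ∑ p ∈ antidiagonal n, F p) s := by
  set e := HasAntidiagonal.sigmaAntidiagonalEquivProd (A := ℕ)
  rw [← e.hasSum_iff]
  have hfib (n : ℕ) : HasSum (fun p => (F ∘ e) ⟨n, p⟩) (∑ p ∈ antidiagonal n, F p) := by
    rw [← sum_coe_sort]
    exact hasSum_fintype _
  refine ⟨fun h => h.sigma hfib, fun h => ?_⟩
  have hsum : Summable (F ∘ e) := by
    refine (summable_sigma_of_nonneg fun x => hF _).2 ⟨fun n => (hfib n).summable, ?_⟩
    exact h.summable.congr fun n => ((hfib n).tsum_eq).symm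
  convert hsum.hasSum
  exact h.unique (hsum.hasSum.sigma hfib)

lemma hasSum_triangle_iff {g : ℕ → ℕ → ℝ} (hg : ∀ a m, 0 ≤ g a m) {s : ℝ} :
    HasSum (fun p : ℕ × ℕ => g p.1 (p.1 + p.2)) s ↔
      HasSum (fun m => ∑ a ∈ range (m + 1), g a m) s := by
  rw [hasSum_prod_iff_antidiagonal_of_nonneg fun p => hg _ _]
  congr! 2 with m
  rw [Nat.sum_antidiagonal_eq_sum_range_succ fun a b => g a (a + b)]
  refine sum_congr rfl fun a ha => ?_
  rw [Nat.add_sub_cancel' (Nat.lt_succ_iff.1 (mem_range.1 ha))]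

lemma HasSum.add_swap {α M : Type*} [AddCommMonoid M] [TopologicalSpace M] [ContinuousAdd M]
    {f : α × α → M} {a : M} (h : HasSum f a) : HasSum (fun p => f p + f p.swap) (a + a) :=
  h.add ((Equiv.prodComm α α).hasSum_iff.2 h)

lemma hasSum_zetaH_succ {s : ℕ} (hs : 1 ≤ s) :
    HasSum (fun p : ℕ × ℕ => 1 / (((p.1 : ℝ) + 1) ^ s * ((p.2 : ℝ) + 1) * ((p.1 : ℝ) + p.2 + 2)))
      (zetaH (s + 1)) := by
  set D : ℕ × ℕ → ℝ := fun p => 1 / (((p.1 : ℝ) + 1) ^ s * ((p.2 : ℝ) + 1) * ((p.1 : ℝ) + p.2 + 2))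
  have hrow (n : ℕ) : HasSum (fun k => D (n, k)) (H (n + 1) / ((n : ℝ) + 1) ^ (s + 1)) := by
    have hterm (k : ℕ) : 1 / ((n : ℝ) + 1) ^ s * (1 / (((k : ℝ) + 1) * ((k : ℝ) + n + 2)))
        = D (n, k) := by
      simp only [D]
      field_simp
      ring
    have hval : 1 / ((n : ℝ) + 1) ^ s * (H (n + 1) / ((n : ℝ) + 1))
        = H (n + 1) / ((n : ℝ) + 1) ^ (s + 1) := by
      field_simp
      ring
    simpa only [hterm, hval] using (hasSum_one_div_mul_add n).mul_left (1 / ((n : ℝ) + 1) ^ s)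
  have hD : Summable D := by
    have hD0 : 0 ≤ D := fun p => by simp only [D, Pi.zero_apply]; positivity
    refine (summable_prod_of_nonneg hD0).2 ⟨fun n => (hrow n).summable, ?_⟩
    simpa only [(hrow _).tsum_eq] using summable_H_succ_div_pow (by omega : 2 ≤ s + 1)
  rw [zetaH, (hD.hasSum.prod_fiberwise hrow).tsum_eq]
  exact hD.hasSum

lemma hasSum_H_succ_div_add_two_sq :
    HasSum (fun n : ℕ => H (n + 1) / ((n : ℝ) + 2) ^ 2) (zetaH 2 - zeta 3) := by
  have hterm (n : ℕ) : H (n + 1) / ((n : ℝ) + 1) ^ 2 - 1 / ((n : ℝ) + 1) ^ 3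
      = H n / ((n : ℝ) + 1) ^ 2 := by
    rw [H_succ]
    field_simp
    ring
  have h := (hasSum_zetaH le_rfl).sub (hasSum_zeta (by norm_num : 1 < 3))
  simp only [hterm] at h
  rw [← hasSum_nat_add_iff' 1] at h
  simpa [H_zero, add_assoc, one_add_one_eq_two] using h

theorem zetaH_two : zetaH 2 = 2 * zeta 3 := by
  set T : ℕ × ℕ → ℝ := fun p => 1 / (((p.1 : ℝ) + 1) * ((p.1 : ℝ) + p.2 + 2) ^ 2)
  have hT : HasSum T (zetaH 2 - zeta 3) := by
    have hterm (m : ℕ) : H (m + 1) / ((m : ℝ) + 2) ^ 2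
        = ∑ a ∈ range (m + 1), 1 / (((a : ℝ) + 1) * ((m : ℝ) + 2) ^ 2) := by
      rw [H, sum_div]
      refine sum_congr rfl fun a _ => ?_
      rw [div_div]
    have hdiag := hasSum_H_succ_div_add_two_sq
    simp only [hterm] at hdiag
    have := (hasSum_triangle_iff (fun _ _ => by positivity)).2 hdiag
    simpa [T] using this
  have hsym (p : ℕ × ℕ) : 1 / (((p.1 : ℝ) + 1) ^ 1 * ((p.2 : ℝ) + 1) * ((p.1 : ℝ) + p.2 + 2))
      = T p + T p.swap := by
    simp only [T, Prod.fst_swap, Prod.snd_swap]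
    field_simp
    ring
  have hE := hasSum_zetaH_succ le_rfl
  simp only [hsym] at hE
  have := hE.unique hT.add_swap
  linarith

theorem two_mul_zetaH_three : 2 * zetaH 3 = zeta 2 ^ 2 := by
  have hD := hasSum_zetaH_succ (s := 2) (by norm_num)
  have hz := hasSum_zeta (by norm_num : 1 < 2)
  have hsum := hz.summable.mul_of_nonneg hz.summable (fun _ => by positivity) fun _ => by positivity
  have hprod := hz.mul hz hsum
  have hsym (p : ℕ × ℕ) : 1 / ((p.1 : ℝ) + 1) ^ 2 * (1 / ((p.2 : ℝ) + 1) ^ 2) =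
      1 / (((p.1 : ℝ) + 1) ^ 2 * ((p.2 : ℝ) + 1) * ((p.1 : ℝ) + p.2 + 2)) +
      1 / (((p.2 : ℝ) + 1) ^ 2 * ((p.1 : ℝ) + 1) * ((p.2 : ℝ) + p.1 + 2)) := by
    field_simp
    ring
  simp only [hsym] at hprod
  have := hprod.unique hD.add_swap
  linarith

theorem zetaH_three : zetaH 3 = 5 / 4 * zeta 4 := by
  rw [zeta_eq_of_hasSum four_ne_zero hasSum_zeta_four]
  have h := two_mul_zetaH_three
  rw [zeta_eq_of_hasSum two_ne_zero hasSum_zeta_two] at h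
  linear_combination h / 2

theorem stmt12 :
    ∑' n : ℕ, H (n + 1) * hzeta 3 (n + 1) =
      2 * zeta 3 + (5 / 4) * zeta 4 - zeta 2 := by
  set g : ℕ → ℕ → ℝ := fun a m => H (a + 1) / ((m : ℝ) + 1) ^ 3
  have hdiag : HasSum (fun m => ∑ a ∈ range (m + 1), g a m) (zetaH 3 + zetaH 2 - zeta 2) := by
    have hterm (m : ℕ) : H (m + 1) / ((m : ℝ) + 1) ^ 3 + H (m + 1) / ((m : ℝ) + 1) ^ 2
        - 1 / ((m : ℝ) + 1) ^ 2 = ∑ a ∈ range (m + 1), g a m := by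
      rw [← sum_div, sum_range_H_succ]
      field_simp
      ring
    simpa only [hterm] using ((hasSum_zetaH (by norm_num : 2 ≤ 3)).add
      (hasSum_zetaH le_rfl)).sub (hasSum_zeta (by norm_num : 1 < 2))
  have hrow (a : ℕ) : HasSum (fun b => g a (a + b)) (H (a + 1) * hzeta 3 (a + 1)) := by
    have hterm (b : ℕ) : H (a + 1) * (1 / ((b : ℝ) + (a + 1 : ℕ)) ^ 3) = g a (a + b) := by
      simp only [g]
      push_cast
      ring
    simpa only [hterm] using (hasSum_hzeta (by norm_num : 1 < 3) (a + 1)).mul_left (H (a + 1))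
  have hg (a m : ℕ) : 0 ≤ g a m := by have := H_nonneg (a + 1); positivity
  rw [((hasSum_triangle_iff hg).2 hdiag).prod_fiberwise hrow |>.tsum_eq, zetaH_two, zetaH_three]
  ring
end

section
/- For every nonnegative integer r, sum_{n=1}^infty h_n^(r) / ((n+1)(n+2)...(n+r+1)) = 1/r!, where h_n^(0) = 1/n and h_n^(r) = sum_{k=1}^n h_k^(r-1). -/
/-!
Write `S_r(N)` for the `N`-th partial sum and `P_r(n) = (n+2)⋯(n+r+2)`. Since
`(r+1) / P_{r+1}(n) = 1 / P_r(n) - 1 / P_r(n+1)` and `h^(r+1)` is the sequence of partial sums of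
`h^(r)`, Abel summation gives `(r+1) S_{r+1}(N) = S_r(N) - h_N^(r+1) / P_r(N)`. The boundary term is
at most `h_N^(1) / N`, a Cesàro mean of `1 / k`, so it tends to `0`; by induction from
`S_0(N) = 1 - 1 / (N+1)` the partial sums tend to `1 / r!`.
-/

open scoped BigOperators

open Filter Finset Topology

lemma h_nonneg : ∀ r n, 0 ≤ h r n
  | 0, n => by simp only [h]; positivity
  | r + 1, _ => sum_nonneg fun k _ => h_nonneg r (k + 1)

lemma h_succ_succ (r n : ℕ) : h (r + 1) (n + 1) = h (r + 1) n + h r (n + 1) := by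
  simp only [h, sum_range_succ]

lemma h_monotone (r : ℕ) : Monotone (h (r + 1)) :=
  monotone_nat_of_le_succ fun n => by
    rw [h_succ_succ]
    exact le_add_of_nonneg_right (h_nonneg r (n + 1))

lemma h_le_pow_mul_h_one (r N : ℕ) : h (r + 1) N ≤ (N : ℝ) ^ r * h 1 N := by
  induction r with
  | zero => simp
  | succ r ih =>
    calc h (r + 2) N = ∑ k ∈ range N, h (r + 1) (k + 1) := rfl
      _ ≤ ∑ _k ∈ range N, (N : ℝ) ^ r * h 1 N := sum_le_sum fun k hk =>
          (h_monotone r (mem_range.mp hk)).trans ih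
      _ = (N : ℝ) ^ (r + 1) * h 1 N := by rw [sum_const, card_range, nsmul_eq_mul]; ring

lemma tendsto_h_one_div_atTop : Tendsto (fun N : ℕ => h 1 N / N) atTop (𝓝 0) := by
  have := (tendsto_one_div_add_atTop_nhds_zero_nat (𝕜 := ℝ)).cesaro
  refine this.congr fun N => ?_
  simp only [h, Nat.cast_add, Nat.cast_one, div_eq_inv_mul, mul_one]

lemma prod_range_succ_add_natCast (x : ℝ) (k : ℕ) :
    ∏ i ∈ range (k + 1), (x + i) = x * ∏ i ∈ range k, (x + 1 + i) := by
  rw [prod_range_succ', mul_comm]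
  push_cast
  simp only [add_zero, add_assoc, add_comm (1 : ℝ)]

lemma one_div_prod_sub_one_div_prod {x : ℝ} (hx : 0 < x) (k : ℕ) :
    1 / ∏ i ∈ range k, (x + i) - 1 / ∏ i ∈ range k, (x + 1 + i) =
      k / ∏ i ∈ range (k + 1), (x + i) := by
  have hP : 0 < ∏ i ∈ range k, (x + i) := prod_pos fun i _ => by positivity
  have hQ : 0 < ∏ i ∈ range k, (x + 1 + i) := prod_pos fun i _ => by positivity
  have h₁ := prod_range_succ (fun i : ℕ => x + i) k
  have h₂ := prod_range_succ_add_natCast x k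
  rw [div_sub_div _ _ hP.ne' hQ.ne', div_eq_div_iff (by positivity) (by positivity)]
  linear_combination (∏ i ∈ range k, (x + 1 + i)) * h₁ - (∏ i ∈ range k, (x + i)) * h₂

lemma sum_range_partialSum_mul_sub {R : Type*} [CommRing R] (a w : ℕ → R) (N : ℕ) :
    ∑ n ∈ range N, (∑ k ∈ range (n + 1), a k) * (w n - w (n + 1)) =
      ∑ n ∈ range N, a n * w n - (∑ k ∈ range N, a k) * w N := by
  induction N with
  | zero => simp
  | succ N ih =>
    rw [sum_range_succ, ih]
    simp only [sum_range_succ]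
    ring

noncomputable def partialSum (r N : ℕ) : ℝ :=
  ∑ n ∈ range N, h r (n + 1) / ∏ i ∈ range (r + 1), ((n : ℝ) + 2 + i)

lemma partialSum_zero (N : ℕ) : partialSum 0 N = 1 - 1 / ((N : ℝ) + 1) := by
  have term (n : ℕ) : h 0 (n + 1) / ∏ i ∈ range 1, ((n : ℝ) + 2 + i) =
      1 / ((n : ℝ) + 1) - 1 / (((n + 1 : ℕ) : ℝ) + 1) := by
    simp only [h, prod_range_one, Nat.cast_add, Nat.cast_one, Nat.cast_zero, add_zero]
    field_simp
    ring
  simp only [partialSum, term, sum_range_sub', Nat.cast_zero, zero_add, div_one]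

lemma succ_mul_partialSum_succ (r N : ℕ) :
    ((r : ℝ) + 1) * partialSum (r + 1) N =
      partialSum r N - h (r + 1) N / ∏ i ∈ range (r + 1), ((N : ℝ) + 2 + i) := by
  have telescope (n : ℕ) : ((r : ℝ) + 1) / ∏ i ∈ range (r + 2), ((n : ℝ) + 2 + i) =
      1 / ∏ i ∈ range (r + 1), ((n : ℝ) + 2 + i) -
        1 / ∏ i ∈ range (r + 1), (((n + 1 : ℕ) : ℝ) + 2 + i) := by
    rw [show ((n + 1 : ℕ) : ℝ) + 2 = (n : ℝ) + 2 + 1 by push_cast; ring,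
      one_div_prod_sub_one_div_prod (by positivity)]
    push_cast
    ring
  rw [partialSum, mul_sum]
  calc ∑ n ∈ range N, ((r : ℝ) + 1) * (h (r + 1) (n + 1) / ∏ i ∈ range (r + 2), ((n : ℝ) + 2 + i))
      = ∑ n ∈ range N, h (r + 1) (n + 1) * (1 / ∏ i ∈ range (r + 1), ((n : ℝ) + 2 + i) -
          1 / ∏ i ∈ range (r + 1), (((n + 1 : ℕ) : ℝ) + 2 + i)) :=
        sum_congr rfl fun n _ => by rw [← telescope]; ring
    _ = partialSum r N - h (r + 1) N / ∏ i ∈ range (r + 1), ((N : ℝ) + 2 + i) := by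
        have := sum_range_partialSum_mul_sub (fun n => h r (n + 1))
          (fun n => 1 / ∏ i ∈ range (r + 1), ((n : ℝ) + 2 + i)) N
        simp only [mul_one_div] at this
        exact this

lemma pow_le_prod_add_natCast {x y : ℝ} (hx : 0 ≤ x) (hxy : x ≤ y) (k : ℕ) :
    x ^ k ≤ ∏ i ∈ range k, (y + i) := by
  calc x ^ k = ∏ _i ∈ range k, x := by rw [prod_const, card_range]
    _ ≤ ∏ i ∈ range k, (y + i) :=
        prod_le_prod (fun _ _ => hx) fun i _ => le_add_of_le_of_nonneg hxy i.cast_nonneg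

lemma tendsto_h_div_prod_atTop (r : ℕ) :
    Tendsto (fun N : ℕ => h (r + 1) N / ∏ i ∈ range (r + 1), ((N : ℝ) + 2 + i)) atTop (𝓝 0) := by
  refine squeeze_zero' (.of_forall fun N => by have := h_nonneg (r + 1) N; positivity) ?_
    tendsto_h_one_div_atTop
  filter_upwards [eventually_gt_atTop 0] with N hN
  have hN' : (0 : ℝ) < N := Nat.cast_pos.mpr hN
  calc h (r + 1) N / ∏ i ∈ range (r + 1), ((N : ℝ) + 2 + i)
      ≤ (N : ℝ) ^ r * h 1 N / (N : ℝ) ^ (r + 1) :=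
        div_le_div₀ (by have := h_nonneg 1 N; positivity) (h_le_pow_mul_h_one r N)
          (by positivity) (pow_le_prod_add_natCast hN'.le (by linarith) (r + 1))
    _ = h 1 N / N := by field_simp; ring

lemma tendsto_partialSum (r : ℕ) :
    Tendsto (partialSum r) atTop (𝓝 (1 / r.factorial)) := by
  induction r with
  | zero =>
    simp only [funext partialSum_zero, Nat.factorial_zero, Nat.cast_one]
    simpa using tendsto_const_nhds.sub (tendsto_one_div_add_atTop_nhds_zero_nat (𝕜 := ℝ))
  | succ r ih =>
    have hrec : partialSum (r + 1) = fun N =>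
        (partialSum r N - h (r + 1) N / ∏ i ∈ range (r + 1), ((N : ℝ) + 2 + i)) / (r + 1) := by
      ext N
      rw [← succ_mul_partialSum_succ]
      field_simp
    have hlim : (1 / r.factorial - 0) / ((r : ℝ) + 1) = 1 / (r + 1).factorial := by
      rw [Nat.factorial_succ, Nat.cast_mul]
      field_simp
      push_cast
      ring
    rw [hrec, ← hlim]
    exact (ih.sub (tendsto_h_div_prod_atTop r)).div_const _

theorem stmt15 (r : ℕ) :
    ∑' n : ℕ, h r (n + 1) / ∏ i ∈ Finset.range (r + 1), ((n : ℝ) + 2 + i) =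
      1 / (r.factorial : ℝ) := by
  refine ((hasSum_iff_tendsto_nat_of_nonneg (fun n => ?_) _).mpr (tendsto_partialSum r)).tsum_eq
  have := h_nonneg r (n + 1)
  positivity
end
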